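/- arXiv:1203.6055 — 2 statements merged into one kernel-verified Lean document; each statement's English description precedes it below -/
import Mathlib

section
/- For all integers M, N, K (with y invertible), L_M(x,y)·F_N(x,y) − L_{M+K}(x,y)·F_{N−K}(x,y) = (−y)^{N−K} · L_{M+K−N}(x,y) · F_K(x,y). -/
/-- Bivariate Fibonacci polynomials. -/
def bF {K : Type*} [Field K] (x y : K) : ℕ → K
  | 0 => 0
  | 1 => 1
  | n + 2 => x * bF x y (n + 1) + y * bF x y n

/-- Bivariate Lucas polynomials. -/
def bL {K : Type*} [Field K] (x y : K) : ℕ → K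
  | 0 => 2
  | 1 => x
  | n + 2 => x * bL x y (n + 1) + y * bL x y n

/-- Bivariate Fibonacci polynomials extended to all integer indices. -/
noncomputable def zF {K : Type*} [Field K] (x y : K) (n : ℤ) : K :=
  if 0 ≤ n then bF x y n.toNat else -((-y) ^ n) * bF x y (-n).toNat

/-- Bivariate Lucas polynomials extended to all integer indices:
L_{-n} = (-y)^{-n} L_n. -/
noncomputable def zL {K : Type*} [Field K] (x y : K) (n : ℤ) : K :=
  if 0 ≤ n then bL x y n.toNat else (-y) ^ n * bL x y (-n).toNat

/-! For `y ≠ 0`, a solution on `ℤ` of `u (n + 2) = x * u (n + 1) + y * u n` is determined by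
`u 0` and `u 1`, and solutions are preserved by shifts and by the reflection
`u ↦ (n ↦ (-y) ^ n * u (b - n))`. Comparing values at `0` and `1` therefore gives
`L_a F_b = F_{a+b} + (-y)^a F_{b-a}`. Expanding the three products of the identity with it, the
terms `F_{M+N}` cancel and what is left matches by `F_{-n} = -(-y)^{-n} F_n`. -/

section

variable {K : Type*} [Field K] {x y : K}

def SolvesRec (x y : K) (f : ℤ → K) : Prop :=
  ∀ n : ℤ, f (n + 2) = x * f (n + 1) + y * f n

namespace SolvesRec

variable {f g : ℤ → K}

lemma add (hf : SolvesRec x y f) (hg : SolvesRec x y g) : SolvesRec x y (fun n => f n + g n) :=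
  fun n => by simp only [hf n, hg n]; ring

lemma mul_const (hf : SolvesRec x y f) (c : K) : SolvesRec x y (fun n => f n * c) :=
  fun n => by simp only [hf n]; ring

lemma comp_add_const (hf : SolvesRec x y f) (b : ℤ) : SolvesRec x y (fun n => f (n + b)) :=
  fun n => by simpa only [add_right_comm] using hf (n + b)

lemma reflect (hy : y ≠ 0) (hf : SolvesRec x y f) (b : ℤ) :
    SolvesRec x y (fun n => (-y) ^ n * f (b - n)) := by
  intro n
  have hrec := hf (b - n - 2)
  rw [show b - n - 2 + 2 = b - n by ring, show b - n - 2 + 1 = b - (n + 1) by ring] at hrec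
  have hny := neg_ne_zero.mpr hy
  have e1 : (-y) ^ (n + 1) = -((-y) ^ n * y) := by rw [zpow_add_one₀ hny]; ring
  have e2 : (-y) ^ (n + 2) = (-y) ^ n * y ^ 2 := by
    rw [zpow_add₀ hny, show ((2 : ℤ)) = ((2 : ℕ) : ℤ) from rfl, zpow_natCast]; ring
  simp only [e1, e2, show b - (n + 2) = b - n - 2 by ring]
  linear_combination -((-y) ^ n * y * hrec)

lemma eq_of_eq_zero_of_eq_one (hy : y ≠ 0) (hf : SolvesRec x y f) (hg : SolvesRec x y g)
    (h0 : f 0 = g 0) (h1 : f 1 = g 1) : f = g := by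
  suffices h : ∀ n : ℤ, f n = g n ∧ f (n + 1) = g (n + 1) from funext fun n => (h n).1
  intro n
  induction n using Int.induction_on with
  | zero => exact ⟨h0, h1⟩
  | succ m ih =>
    refine ⟨ih.2, ?_⟩
    rw [add_assoc, one_add_one_eq_two, hf, hg, ih.1, ih.2]
  | pred m ih =>
    refine ⟨?_, by simpa using ih.1⟩
    have hfm := hf (-m - 1)
    have hgm := hg (-m - 1)
    rw [show -(m : ℤ) - 1 + 2 = -m + 1 by ring, show -(m : ℤ) - 1 + 1 = -m by ring] at hfm hgm
    refine mul_left_cancel₀ hy ?_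
    linear_combination hgm - hfm + ih.2 - x * ih.1

end SolvesRec

lemma solvesRec_of_nat (hy : y ≠ 0) {f : ℤ → K} (c : K)
    (hnat : ∀ n : ℕ, f ↑(n + 2) = x * f ↑(n + 1) + y * f n)
    (hneg : ∀ n : ℕ, f (-n) = c * (-y) ^ (-(n : ℤ)) * f n)
    (hm1 : f 1 = x * f 0 + y * f (-1)) : SolvesRec x y f := by
  intro n
  rcases n with m | (_ | m)
  · exact_mod_cast hnat m
  · simpa using hm1
  · have hny := neg_ne_zero.mpr hy
    have e : Int.negSucc (m + 1) = -((m + 2 : ℕ) : ℤ) := by omega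
    have p1 : (-y) ^ (-((m + 1 : ℕ) : ℤ)) = (-y) ^ (-((m + 2 : ℕ) : ℤ)) * (-y) := by
      rw [← zpow_add_one₀ hny, show -((m + 2 : ℕ) : ℤ) + 1 = -((m + 1 : ℕ) : ℤ) by omega]
    have p0 : (-y) ^ (-(m : ℤ)) = (-y) ^ (-((m + 2 : ℕ) : ℤ)) * (-y) ^ 2 := by
      rw [← zpow_natCast, ← zpow_add₀ hny, show -((m + 2 : ℕ) : ℤ) + ((2 : ℕ) : ℤ) = -m by omega]
    rw [e, show -((m + 2 : ℕ) : ℤ) + 2 = -(m : ℤ) by push_cast; ring,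
      show -((m + 2 : ℕ) : ℤ) + 1 = -((m + 1 : ℕ) : ℤ) by push_cast; ring,
      hneg, hneg, hneg, p1, p0]
    generalize (-y) ^ (-((m + 2 : ℕ) : ℤ)) = p
    have h := hnat m
    push_cast at h ⊢
    linear_combination (-(y * c * p)) * h

variable (x y)

@[simp] lemma zF_natCast (n : ℕ) : zF x y n = bF x y n := by simp [zF]

@[simp] lemma zL_natCast (n : ℕ) : zL x y n = bL x y n := by simp [zL]

lemma zF_neg_natCast (n : ℕ) : zF x y (-n) = -(-y) ^ (-(n : ℤ)) * bF x y n := by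
  rcases n.eq_zero_or_pos with rfl | hn
  · simp [zF, bF]
  · rw [zF, if_neg (by omega), neg_neg, Int.toNat_natCast]

lemma zL_neg_natCast (n : ℕ) : zL x y (-n) = (-y) ^ (-(n : ℤ)) * bL x y n := by
  rcases n.eq_zero_or_pos with rfl | hn
  · simp [zL, bL]
  · rw [zL, if_neg (by omega), neg_neg, Int.toNat_natCast]

variable {y}

lemma solvesRec_zF (hy : y ≠ 0) : SolvesRec x y (zF x y) := by
  refine solvesRec_of_nat hy (-1) (fun n => by simp only [zF_natCast]; rfl)
    (fun n => by rw [zF_neg_natCast, zF_natCast]; ring) ?_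
  simp [zF, bF, hy]

lemma solvesRec_zL (hy : y ≠ 0) : SolvesRec x y (zL x y) := by
  refine solvesRec_of_nat hy 1 (fun n => by simp only [zL_natCast]; rfl)
    (fun n => by rw [zL_neg_natCast, zL_natCast]; ring) ?_
  simp [zL, bL, hy, mul_two]

lemma zF_neg (hy : y ≠ 0) (n : ℤ) : zF x y (-n) = -(-y) ^ (-n) * zF x y n := by
  obtain ⟨m, rfl | rfl⟩ := Int.eq_nat_or_neg n
  · rw [zF_neg_natCast, zF_natCast]
  · rw [neg_neg, zF_natCast, zF_neg_natCast, ← mul_assoc, neg_mul_neg,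
      ← zpow_add₀ (neg_ne_zero.mpr hy), add_neg_cancel, zpow_zero, one_mul]

lemma zL_mul_zF (hy : y ≠ 0) (a b : ℤ) :
    zL x y a * zF x y b = zF x y (a + b) + (-y) ^ a * zF x y (b - a) := by
  have hF := solvesRec_zF x hy
  have h1 := hF (b - 1)
  rw [show b - 1 + 2 = 1 + b by ring, show b - 1 + 1 = b by ring] at h1
  have := ((solvesRec_zL x hy).mul_const (zF x y b)).eq_of_eq_zero_of_eq_one hy
    ((hF.comp_add_const b).add (hF.reflect hy b))
    (by simp [zL, bL, two_mul]) (by simp [zL, bL, h1])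
  exact congrFun this a

end

/-- L_M F_N − L_{M+K} F_{N−K} = (−y)^{N−K} L_{M+K−N} F_K. -/
theorem lucas_fib_index_reduction_special {K : Type*} [Field K] (x y : K) (hy : y ≠ 0)
    (M N k : ℤ) :
    zL x y M * zF x y N - zL x y (M + k) * zF x y (N - k) =
      (-y) ^ (N - k) * zL x y (M + k - N) * zF x y k := by
  have hny : -y ≠ 0 := neg_ne_zero.mpr hy
  rw [zL_mul_zF x hy M N, zL_mul_zF x hy (M + k) (N - k), mul_assoc,
    zL_mul_zF x hy (M + k - N) k, show M + k + (N - k) = M + N by ring,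
    show N - k - (M + k) = N - M - 2 * k by ring, show M + k - N + k = M + 2 * k - N by ring,
    show k - (M + k - N) = N - M by ring]
  have hneg := zF_neg x hy (M + 2 * k - N)
  rw [show -(M + 2 * k - N) = N - M - 2 * k by ring] at hneg
  have hpow₁ : (-y) ^ (N - k) * (-y) ^ (M + k - N) = (-y) ^ M := by
    rw [← zpow_add₀ hny]; congr 1; ring
  have hpow₂ : (-y) ^ (M + k) * (-y) ^ (N - M - 2 * k) = (-y) ^ (N - k) := by
    rw [← zpow_add₀ hny]; congr 1; ring
  linear_combination -zF x y (N - M) * hpow₁ + zF x y (M + 2 * k - N) * hpow₂ -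
    (-y) ^ (M + k) * hneg
end

section
/- For all s ≥ 1 and n ≥ 0, F_{sn}(x,y)² = F_s(x,y)² · ( C(n+1,2)_{F_s(x,y)} + (−y)^s · C(n,2)_{F_s(x,y)} ), where C(m,2)_{F_s} = F_{sm}(x,y)·F_{s(m−1)}(x,y)/(F_s(x,y)·F_{2s}(x,y)) for m ≥ 2 and C(m,2)=0 for m < 2. -/
/-- The bivariate s-Fibopolynomial (equal to 0 when k > n, since F_0 = 0
appears in the numerator). -/
noncomputable def fibo {K : Type*} [Field K] (x y : K) (s n k : ℕ) : K :=
  (∏ i ∈ Finset.range k, bF x y (s * (n - i))) / ∏ i ∈ Finset.range k, bF x y (s * (i + 1))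

/-- The field ℚ(x,y) of rational functions in two variables. -/
noncomputable abbrev RF2 : Type := FractionRing (MvPolynomial (Fin 2) ℚ)

noncomputable def Xv : RF2 := algebraMap (MvPolynomial (Fin 2) ℚ) RF2 (MvPolynomial.X 0)
noncomputable def Yv : RF2 := algebraMap (MvPolynomial (Fin 2) ℚ) RF2 (MvPolynomial.X 1)


/-!
Dividing out the definition of the Fibopolynomials, the identity becomes
`F_s (F_{s(n+1)} + (-y)^s F_{s(n-1)}) = F_{sn} F_{2s}`, an instance of the Vajda-type identity
`F_{c+s} F_{2s} = F_s F_{c+2s} + (-y)^s F_s F_c`, which follows from the addition formula and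
d'Ocagne's identity. The denominator `F_{2s}` does not vanish in `ℚ(x,y)` because
`F_n(x,y)` is a polynomial specialising to `1` at `(x,y) = (1,0)`.
-/

section Field

variable {K : Type*} [Field K] (x y : K)

lemma bF_add_two (n : ℕ) : bF x y (n + 2) = x * bF x y (n + 1) + y * bF x y n := rfl

lemma bF_add (m n : ℕ) :
    bF x y (m + n + 1) = bF x y (m + 1) * bF x y (n + 1) + y * bF x y m * bF x y n := by
  induction n using Nat.twoStepInduction with
  | zero => simp [bF]
  | one => simp [bF]; ring
  | more n ih ih' =>
    rw [show m + (n + 2) + 1 = m + n + 1 + 2 by omega, show n + 2 + 1 = n + 1 + 2 by omega,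
      bF_add_two, bF_add_two x y (n + 1), bF_add_two x y n,
      show m + n + 1 + 1 = m + (n + 1) + 1 by omega]
    linear_combination x * ih' + y * ih + x * bF x y (m + 1) * bF_add_two x y n

/-- d'Ocagne's identity. -/
lemma neg_pow_mul_bF (c s : ℕ) :
    (-y) ^ s * bF x y c = bF x y (c + s) * bF x y (s + 1) - bF x y (c + s + 1) * bF x y s := by
  induction s with
  | zero => simp [bF]
  | succ s ih =>
    rw [← add_assoc, bF_add_two, show c + s + 1 + 1 = c + s + 2 by omega, bF_add_two]
    linear_combination (-y) * ih

lemma bF_add_mul_bF_two_mul (c s : ℕ) :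
    bF x y (c + s) * bF x y (2 * s) =
      bF x y s * bF x y (c + 2 * s) + (-y) ^ s * bF x y s * bF x y c := by
  obtain _ | t := s
  · simp [bF]
  have hc := bF_add x y (c + t + 1) t
  have h2 := bF_add x y (t + 1) t
  rw [show c + t + 1 + t + 1 = c + 2 * (t + 1) by omega] at hc
  rw [show t + 1 + t + 1 = 2 * (t + 1) by omega] at h2
  rw [hc, h2, ← add_assoc]
  linear_combination (-bF x y (t + 1)) * neg_pow_mul_bF x y c (t + 1)

lemma fibo_two (s n : ℕ) :
    fibo x y s n 2 = bF x y (s * n) * bF x y (s * (n - 1)) / (bF x y s * bF x y (2 * s)) := by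
  simp [fibo, Finset.prod_range_succ, mul_comm s 2]

theorem bF_mul_sq_eq_fibo {s : ℕ} (h2s : bF x y (2 * s) ≠ 0) (n : ℕ) :
    bF x y (s * n) ^ 2 =
      bF x y s ^ 2 * (fibo x y s (n + 1) 2 + (-y) ^ s * fibo x y s n 2) := by
  obtain _ | m := n
  · simp [fibo_two, bF]
  have key := bF_add_mul_bF_two_mul x y (s * m) s
  rw [← mul_add_one, show s * m + 2 * s = s * (m + 2) by ring] at key
  rw [fibo_two, fibo_two, Nat.add_sub_cancel, Nat.add_sub_cancel]
  field_simp
  linear_combination bF x y (s * (m + 1)) * key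

end Field

def bivFib {R : Type*} [CommRing R] (x y : R) : ℕ → R
  | 0 => 0
  | 1 => 1
  | n + 2 => x * bivFib x y (n + 1) + y * bivFib x y n

lemma bF_eq_bivFib {K : Type*} [Field K] (x y : K) (n : ℕ) : bF x y n = bivFib x y n := by
  induction n using Nat.twoStepInduction with
  | zero => rfl
  | one => rfl
  | more n ih ih' => simp only [bF, bivFib, ih, ih']

lemma map_bivFib {R S : Type*} [CommRing R] [CommRing S] (f : R →+* S) (x y : R) (n : ℕ) :
    f (bivFib x y n) = bivFib (f x) (f y) n := by
  induction n using Nat.twoStepInduction with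
  | zero => simp [bivFib]
  | one => simp [bivFib]
  | more n ih ih' => simp only [bivFib, map_add, map_mul, ih, ih']

lemma bivFib_one_zero {R : Type*} [CommRing R] (n : ℕ) : bivFib (1 : R) 0 (n + 1) = 1 := by
  induction n with
  | zero => rfl
  | succ n ih => simp only [bivFib, ih]; ring

lemma bF_Xv_Yv_ne_zero {n : ℕ} (hn : n ≠ 0) : bF Xv Yv n ≠ 0 := by
  obtain ⟨k, rfl⟩ := Nat.exists_eq_succ_of_ne_zero hn
  let P := bivFib (MvPolynomial.X 0 : MvPolynomial (Fin 2) ℚ) (MvPolynomial.X 1) (k + 1)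
  have hP : MvPolynomial.eval ![1, 0] P = 1 := by
    simp only [P, map_bivFib, MvPolynomial.eval_X]
    exact bivFib_one_zero k
  rw [bF_eq_bivFib, Xv, Yv, ← map_bivFib,
    map_ne_zero_iff _ (IsFractionRing.injective (MvPolynomial (Fin 2) ℚ) RF2)]
  intro h
  simp [P, h] at hP

/-- F_{sn}² = F_s² · ( C(n+1,2)_{F_s} + (−y)^s C(n,2)_{F_s} ). -/
theorem fib_sq_as_fibopolynomials (s n : ℕ) (hs : 1 ≤ s) :
    bF Xv Yv (s * n) ^ 2 =
      bF Xv Yv s ^ 2 * (fibo Xv Yv s (n + 1) 2 + (-Yv) ^ s * fibo Xv Yv s n 2) :=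
  bF_mul_sq_eq_fibo Xv Yv (bF_Xv_Yv_ne_zero (by omega)) n
end
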